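/- arXiv:1708.09527 — 3 statements merged into one kernel-verified Lean document; each statement's English description precedes it below -/
import Mathlib

section
/- Let r₁ < ⋯ < r_k be positive integers and n > r_k² with gcd(n, gcd(r₁,…,r_k)) = 1, and let M_n = ⟨n, n+r₁, …, n+r_k⟩. If a⃗ and b⃗ are factorizations of the same element m ∈ M_n with |a⃗| < |b⃗|, then there exists a factorization b⃗′ of m with |b⃗′| = |b⃗| whose coordinate corresponding to the generator n is positive. -/
open scoped Classical

/-- Membership in the additive submonoid of `ℕ` generated by `r 0, …, r (k-1)`. -/
def memGen {k : ℕ} (r : Fin k → ℕ) (a : ℕ) : Prop :=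
  ∃ z : Fin k → ℕ, a = ∑ i, z i * r i

/-- The Apéry set `Ap(S; x) = {m ∈ S : m - x ∉ S}` (subtraction in `ℤ`,
encoded by the guard `x ≤ m`). -/
def aperySet {k : ℕ} (r : Fin k → ℕ) (x : ℕ) : Set ℕ :=
  {m | memGen r m ∧ ¬(x ≤ m ∧ memGen r (m - x))}

/-- The set of factorization lengths of `a` in the monoid generated by `r`. -/
def lenSet {k : ℕ} (r : Fin k → ℕ) (a : ℕ) : Set ℕ :=
  {ℓ | ∃ z : Fin k → ℕ, a = ∑ i, z i * r i ∧ ℓ = ∑ i, z i}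

/-- The minimum factorization length of `a` in the monoid generated by `r`. -/
noncomputable def minLen {k : ℕ} (r : Fin k → ℕ) (a : ℕ) : ℕ :=
  sInf (lenSet r a)

/-- The generators `n, n + r 0, …, n + r (k-1)` of the shifted monoid `M_n`. -/
def shiftGen {k : ℕ} (n : ℕ) (r : Fin k → ℕ) : Fin (k + 1) → ℕ :=
  Fin.cons n (fun i => n + r i)

/-- The genus: the number of gaps of the monoid generated by `r`. -/
noncomputable def genus {k : ℕ} (r : Fin k → ℕ) : ℕ :=
  Set.ncard {m : ℕ | ¬ memGen r m}

/-- The Frobenius number: the largest gap of the monoid generated by `r`. -/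
noncomputable def frob {k : ℕ} (r : Fin k → ℕ) : ℕ :=
  sSup {m : ℕ | ¬ memGen r m}

/-- The set of pseudo-Frobenius numbers of the monoid generated by `r`. -/
def pseudoFrob {k : ℕ} (r : Fin k → ℕ) : Set ℕ :=
  {m | ¬ memGen r m ∧ ∀ x : ℕ, memGen r x → 0 < x → memGen r (m + x)}

/-!
Write `s_x = ∑ xᵢ rᵢ` for the part of a factorization `x` beyond the multiples of `n`, so
that `m = |x| n + s_x`. Then `s_b + n ≤ s_a ≤ |a| r_k`, as `|a| < |b|`. A shortest
factorization of `s_b` in `⟨r₁, …, r_k⟩` has fewer than `r_k` parts below `r_k`: among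
`r_k` of them, prefix sums modulo `r_k` yield a block of some `p` parts summing to `d r_k`
with `d < p`, which may be replaced by `d` copies of `r_k`. Its length `ℓ` therefore
satisfies `(ℓ + 1) r_k ≤ s_b + r_k² < s_b + n ≤ |a| r_k`, so `ℓ < |b|`, and `b′` is this
factorization together with `|b| - ℓ` copies of `n`.
-/

theorem List.exists_sublist_ne_nil_dvd_sum_map {α : Type*} (f : α → ℕ) {R : ℕ} (hR : 0 < R)
    (l : List α) (hl : R ≤ l.length) :
    ∃ u, u.Sublist l ∧ u ≠ [] ∧ R ∣ (u.map f).sum := by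
  obtain ⟨x, hx, y, hy, hxy, hmod⟩ := Finset.exists_ne_map_eq_of_card_lt_of_maps_to
    (s := Finset.range (R + 1)) (t := Finset.range R)
    (f := fun j => ((l.map f).take j).sum % R) (by simp)
    (fun j _ => by simpa using Nat.mod_lt _ hR)
  simp only [Finset.mem_range] at hx hy
  set i := min x y
  set j := max x y
  have hij : i < j := min_lt_max.mpr hxy
  have hmod' : ((l.map f).take i).sum ≡ ((l.map f).take j).sum [MOD R] := by
    rcases le_total x y with h | h <;> simp [i, j, h, hmod, Nat.ModEq]
  have hsplit : ((l.map f).take j).sum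
      = ((l.map f).take i).sum + (((l.take j).drop i).map f).sum := by
    rw [← List.sum_take_add_sum_drop _ i, List.take_take, min_eq_left hij.le, List.map_drop,
      List.map_take]
  refine ⟨(l.take j).drop i, (List.drop_sublist _ _).trans (List.take_sublist _ _), ?_, ?_⟩
  · rw [← List.length_pos_iff]
    simp only [List.length_drop, List.length_take]
    omega
  · rw [hsplit] at hmod'
    simpa using (Nat.modEq_iff_dvd' (Nat.le_add_right _ _)).mp hmod'

namespace Multiset

variable {ι : Type*}

theorem exists_le_ne_zero_dvd_sum_map (f : ι → ℕ) {R : ℕ} (hR : 0 < R) (S : Multiset ι)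
    (hS : R ≤ card S) : ∃ U ≤ S, U ≠ 0 ∧ R ∣ (U.map f).sum := by
  obtain ⟨u, hu, hne, hdvd⟩ :=
    List.exists_sublist_ne_nil_dvd_sum_map f hR S.toList (by simpa using hS)
  refine ⟨u, ?_, by simpa using hne, by simpa using hdvd⟩
  simpa using (Multiset.coe_le.mpr hu.subperm : (u : Multiset ι) ≤ S.toList)

variable (r : ι → ℕ)

theorem card_filter_lt_of_forall_card_le {top : ι} (hR : 0 < r top) (T : Multiset ι)
    (hmin : ∀ T' : Multiset ι, (T'.map r).sum = (T.map r).sum → card T ≤ card T') :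
    card (T.filter (r · < r top)) < r top := by
  by_contra! hcard
  obtain ⟨U, hUT, hU0, d, hd⟩ := exists_le_ne_zero_dvd_sum_map r hR _ hcard
  have hU_lt : ∀ i ∈ U, r i < r top := fun i hi => (mem_filter.mp (mem_of_le hUT hi)).2
  have hdU : d < card U := by
    have : (U.map r).sum < (U.map fun _ => r top).sum := sum_lt_sum_of_nonempty hU0 hU_lt
    rw [map_const', sum_replicate, smul_eq_mul, hd] at this
    exact Nat.lt_of_mul_lt_mul_right (mul_comm d _ ▸ this)
  obtain ⟨V, rfl⟩ := le_iff_exists_add.mp (hUT.trans (filter_le _ _))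
  have hsum : ((V + replicate d top).map r).sum = ((U + V).map r).sum := by
    simp only [map_add, sum_add, map_replicate, sum_replicate, smul_eq_mul, hd, mul_comm, add_comm]
  have := hmin _ hsum
  simp only [card_add, card_replicate] at this
  omega

theorem exists_short_factorization (S : Multiset ι) (top : ι) :
    ∃ T : Multiset ι, (T.map r).sum = (S.map r).sum ∧
      (card T + 1) * r top ≤ (S.map r).sum + r top * r top := by
  classical
  rcases Nat.eq_zero_or_pos (r top) with hR | hR
  · exact ⟨S, rfl, by simp [hR]⟩
  have hex : ∃ L, ∃ T : Multiset ι, (T.map r).sum = (S.map r).sum ∧ card T = L :=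
    ⟨_, S, rfl, rfl⟩
  obtain ⟨T, hT, hTcard⟩ := Nat.find_spec hex
  have hsmall : card (T.filter (r · < r top)) < r top :=
    card_filter_lt_of_forall_card_le r hR T fun T' h =>
      hTcard ▸ Nat.find_min' hex ⟨T', h.trans hT, rfl⟩
  have hlarge : card (T.filter (¬ r · < r top)) * r top ≤ (T.map r).sum := by
    calc card (T.filter (¬ r · < r top)) * r top
        ≤ ((T.filter (¬ r · < r top)).map r).sum := by
          simpa using card_nsmul_le_sum (s := (T.filter (¬ r · < r top)).map r)
            (a := r top) (by simp; rintro _ _ _ h rfl; exact h)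
      _ ≤ (T.map r).sum := by
          conv_rhs => rw [← filter_add_not (r · < r top) T]
          simp
  have hcard : card (T.filter (r · < r top)) + card (T.filter (¬ r · < r top)) = card T := by
    rw [← card_add, filter_add_not]
  refine ⟨T, hT, ?_⟩
  calc (card T + 1) * r top
      = (card (T.filter (r · < r top)) + 1) * r top + card (T.filter (¬ r · < r top)) * r top := by
        rw [← hcard]; ring
    _ ≤ r top * r top + (T.map r).sum := add_le_add (Nat.mul_le_mul_right _ hsmall) hlarge
    _ = (S.map r).sum + r top * r top := by rw [hT, add_comm]

variable [Fintype ι] [DecidableEq ι]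

theorem sum_count_mul_eq_sum_map (S : Multiset ι) : ∑ i, S.count i * r i = (S.map r).sum := by
  rw [Finset.sum_multiset_map_count, ← Finset.sum_subset (Finset.subset_univ S.toFinset)]
  · simp
  · intro i _ hi
    simp [count_eq_zero.mpr (by simpa using hi)]

end Multiset

open Multiset in
theorem exists_short_factorization {ι : Type*} [Fintype ι] (r : ι → ℕ) (z : ι → ℕ) (top : ι) :
    ∃ c : ι → ℕ, ∑ i, c i * r i = ∑ i, z i * r i ∧
      (∑ i, c i + 1) * r top ≤ ∑ i, z i * r i + r top * r top := by
  classical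
  set S := ∑ i, replicate (z i) i
  have hS : ∀ i, S.count i = z i := by simp [S, count_sum', count_replicate]
  obtain ⟨T, hT, hle⟩ := Multiset.exists_short_factorization r S top
  have hz : ∑ i, z i * r i = (S.map r).sum := by simp only [← hS, sum_count_mul_eq_sum_map]
  refine ⟨T.count, ?_, ?_⟩
  · rw [sum_count_mul_eq_sum_map, hT, hz]
  · rwa [sum_count_eq_card (fun i _ => Finset.mem_univ i), hz]

theorem sum_mul_shiftGen {k : ℕ} (n : ℕ) (r : Fin k → ℕ) (c : Fin (k + 1) → ℕ) :
    ∑ j, c j * shiftGen n r j = (∑ j, c j) * n + ∑ i, c i.succ * r i := by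
  simp only [Fin.sum_univ_succ, shiftGen, Fin.cons_zero, Fin.cons_succ, mul_add, add_mul,
    Finset.sum_add_distrib, Finset.sum_mul]
  ring

theorem sum_succ_mul_le_sum_mul_last {k : ℕ} {r : Fin (k + 1) → ℕ} (hr : Monotone r)
    (c : Fin (k + 2) → ℕ) : ∑ i, c i.succ * r i ≤ (∑ j, c j) * r (Fin.last k) :=
  calc ∑ i, c i.succ * r i ≤ ∑ i, c i.succ * r (Fin.last k) :=
        Finset.sum_le_sum fun i _ => Nat.mul_le_mul_left _ (hr (Fin.le_last i))
    _ ≤ (∑ j, c j) * r (Fin.last k) := by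
        rw [← Finset.sum_mul, Fin.sum_univ_succ c]
        exact Nat.mul_le_mul_right _ (Nat.le_add_left _ _)

theorem mesa_lemma_general {k : ℕ} (r : Fin (k + 1) → ℕ)
    (hmono : StrictMono r)
    (n : ℕ) (hn : n > (r (Fin.last k)) ^ 2)
    (m : ℕ) (a b : Fin (k + 2) → ℕ)
    (ha : m = ∑ j, a j * shiftGen n r j)
    (hb : m = ∑ j, b j * shiftGen n r j)
    (hab : ∑ j, a j < ∑ j, b j) :
    ∃ b' : Fin (k + 2) → ℕ,
      m = ∑ j, b' j * shiftGen n r j ∧ (∑ j, b' j) = ∑ j, b j ∧ 0 < b' 0 := by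
  set R := r (Fin.last k)
  obtain ⟨c, hc, hcR⟩ := exists_short_factorization r (fun i => b i.succ) (Fin.last k)
  have hm : (∑ j, a j) * n + ∑ i, a i.succ * r i = (∑ j, b j) * n + ∑ i, b i.succ * r i := by
    rw [← sum_mul_shiftGen, ← sum_mul_shiftGen, ← ha, ← hb]
  have hsb_add_n : ∑ i, b i.succ * r i + n ≤ ∑ i, a i.succ * r i := by
    have : (∑ j, a j + 1) * n ≤ (∑ j, b j) * n := Nat.mul_le_mul_right _ hab
    rw [add_one_mul] at this
    omega
  have hc_lt : ∑ i, c i < ∑ j, b j := by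
    have : (∑ i, c i + 1) * R < (∑ j, a j) * R :=
      calc (∑ i, c i + 1) * R ≤ ∑ i, b i.succ * r i + R * R := hcR
        _ < ∑ i, b i.succ * r i + n := by rw [sq] at hn; omega
        _ ≤ ∑ i, a i.succ * r i := hsb_add_n
        _ ≤ (∑ j, a j) * R := sum_succ_mul_le_sum_mul_last hmono.monotone a
    have := Nat.lt_of_mul_lt_mul_right this
    omega
  have hsum : ∑ j, (Fin.cons (∑ j, b j - ∑ i, c i) c : Fin (k + 2) → ℕ) j = ∑ j, b j := by
    rw [Fin.sum_univ_succ]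
    simp only [Fin.cons_zero, Fin.cons_succ]
    omega
  refine ⟨Fin.cons (∑ j, b j - ∑ i, c i) c, ?_, hsum, by simpa using hc_lt⟩
  rw [hb, sum_mul_shiftGen, sum_mul_shiftGen, hsum]
  simp only [Fin.cons_succ, hc]

/-- For `r₁ < ⋯ < r_k` positive, `n > r_k²`, `gcd(n, gcd(r₁,…,r_k)) = 1`,
and `M_n = ⟨n, n+r₁,…,n+r_k⟩`: if `a` and `b` are factorizations of the same `m ∈ M_n`
with `|a| < |b|`, then some factorization `b'` of `m` with `|b'| = |b|` has positive
coordinate on the generator `n`. -/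
theorem mesa_lemma {k : ℕ} (r : Fin (k + 1) → ℕ)
    (hmono : StrictMono r) (hpos : 0 < r 0)
    (n : ℕ) (hn : n > (r (Fin.last k)) ^ 2)
    (hgcd : Nat.gcd n (Finset.univ.gcd r) = 1)
    (m : ℕ) (a b : Fin (k + 2) → ℕ)
    (ha : m = ∑ j, a j * shiftGen n r j)
    (hb : m = ∑ j, b j * shiftGen n r j)
    (hab : ∑ j, a j < ∑ j, b j) :
    ∃ b' : Fin (k + 2) → ℕ,
      m = ∑ j, b' j * shiftGen n r j ∧ (∑ j, b' j) = ∑ j, b j ∧ 0 < b' 0 :=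
  mesa_lemma_general r hmono n hn m a b ha hb hab
end

section
/- Under the hypotheses n > r_k², gcd(n,d) = 1, dn ∈ S, for each i ∈ Ap(S; dn), the element a = i + m_S(i)·n of M_n = ⟨n, n+r₁,…,n+r_k⟩ has exactly one factorization length in M_n, namely m_S(i). In particular M_n is homogeneous: every element of Ap(M_n; n) has a unique factorization length. -/
open scoped Classical

/-!
An `M_n`-factorization of `a` of length `ℓ` is the same as an `S`-factorization of `a - ℓ n`
of length at most `ℓ`. By pigeonhole on residues mod `r_k`, every `s ∈ S` has a factorization
with fewer than `r_k` atoms other than `r_k`, so `m_S(s) r_k ≤ s + r_k²`. As `n > r_k²`, the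
element `m_S(s) n + s` has least `M_n`-length `m_S(s)`: a shorter factorization would leave an
`S`-part of size at least `n + s` with too few atoms to reach it.

For `i ∈ Ap(S; dn)`, a longer factorization would give `i = u n + s'` with `u > 0` and `s' ∈ S`;
then `d ∣ u` because `gcd(n, d) = 1`, so `i - dn ∈ S`. For `a ∈ Ap(M_n; n)`, every length `ℓ` of
`a` equals `m_S(a - ℓ n)`, as otherwise `a - n ∈ M_n`; so every length is the least one.
-/

section Factorization

variable {κ : ℕ} {r : Fin κ → ℕ} {x : ℕ}

lemma memGen_add {a b : ℕ} (ha : memGen r a) (hb : memGen r b) : memGen r (a + b) := by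
  obtain ⟨z, rfl⟩ := ha
  obtain ⟨w, rfl⟩ := hb
  exact ⟨z + w, by simp only [Pi.add_apply, add_mul, Finset.sum_add_distrib]⟩

lemma memGen_mul (c : ℕ) {a : ℕ} (ha : memGen r a) : memGen r (c * a) := by
  obtain ⟨z, rfl⟩ := ha
  exact ⟨c • z, by simp only [Finset.mul_sum, Pi.smul_apply, smul_eq_mul, mul_assoc]⟩

lemma gcd_dvd_of_memGen (hx : memGen r x) : Finset.univ.gcd r ∣ x := by
  obtain ⟨z, rfl⟩ := hx
  exact Finset.dvd_sum fun j _ => (Finset.gcd_dvd (Finset.mem_univ j)).mul_left (z j)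

lemma memGen_of_mem_lenSet {ℓ : ℕ} (h : ℓ ∈ lenSet r x) : memGen r x :=
  let ⟨z, hz, _⟩ := h
  ⟨z, hz⟩

lemma minLen_mem_lenSet (hx : memGen r x) : minLen r x ∈ lenSet r x :=
  let ⟨z, hz⟩ := hx
  Nat.sInf_mem ⟨_, z, hz, rfl⟩

lemma minLen_le {ℓ : ℕ} (h : ℓ ∈ lenSet r x) : minLen r x ≤ ℓ := Nat.sInf_le h

lemma exists_multiset_sum_map_eq (hx : memGen r x) :
    ∃ M : Multiset (Fin κ), (M.map r).sum = x := by
  obtain ⟨z, rfl⟩ := hx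
  refine ⟨Finset.univ.val.bind fun j => Multiset.replicate (z j) j, ?_⟩
  simp only [Multiset.map_bind, Multiset.sum_bind, Multiset.map_replicate,
    Multiset.sum_replicate, smul_eq_mul]
  rfl

lemma card_mem_lenSet (M : Multiset (Fin κ)) :
    Multiset.card M ∈ lenSet r (M.map r).sum := by
  refine ⟨fun j => M.count j, ?_, (Multiset.sum_count_eq_card fun j _ => Finset.mem_univ j).symm⟩
  rw [Finset.sum_multiset_map_count]
  refine Finset.sum_subset (Finset.subset_univ _) fun j _ hj => ?_
  simp [Multiset.count_eq_zero.mpr (by simpa using hj)]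

end Factorization

lemma Multiset.exists_le_ne_zero_dvd_sum_map_s4 {α : Type*} {N : ℕ} (hN : 0 < N) (f : α → ℕ)
    {s : Multiset α} (hs : N ≤ Multiset.card s) :
    ∃ t ≤ s, t ≠ 0 ∧ N ∣ (t.map f).sum := by
  obtain ⟨l, rfl⟩ := Quot.exists_rep s
  change N ≤ l.length at hs
  have hmaps : ∀ i ∈ Finset.range (N + 1), ((l.take i).map f).sum % N ∈ Finset.range N :=
    fun _ _ => Finset.mem_range.mpr (Nat.mod_lt _ hN)
  obtain ⟨i, hi, j, hj, hij, heq⟩ :=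
    Finset.exists_ne_map_eq_of_card_lt_of_maps_to (by simp) hmaps
  wlog hlt : i < j generalizing i j
  · exact this j hj i hi hij.symm heq.symm (by omega)
  rw [Finset.mem_range] at hi hj
  have hsum : ((l.take j).map f).sum =
      ((l.take i).map f).sum + (((l.take j).drop i).map f).sum := by
    conv_lhs => rw [← List.take_append_drop i (l.take j)]
    rw [List.take_take, min_eq_left hlt.le, List.map_append, List.sum_append]
  refine ⟨((l.take j).drop i : List α), ?_, ?_, ?_⟩
  · exact Multiset.coe_le.mpr (((l.take j).drop_sublist i).trans (l.take_sublist j)).subperm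
  · simp only [ne_eq, Multiset.coe_eq_zero, List.drop_eq_nil_iff, List.length_take, inf_le_iff,
      not_or, not_le]
    omega
  · have := Nat.sub_mod_eq_zero_of_mod_eq heq.symm
    rw [hsum, Nat.add_sub_cancel_left] at this
    exact Nat.dvd_of_mod_eq_zero this

section Reduction

variable {κ : ℕ} (r : Fin κ → ℕ) (j : Fin κ) {x : ℕ}

lemma exists_sum_map_add_mul_eq (hj : 0 < r j) (M : Multiset (Fin κ)) :
    ∃ (M' : Multiset (Fin κ)) (c : ℕ),
      (M'.map r).sum + c * r j = (M.map r).sum ∧ Multiset.card M' < r j := by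
  induction hM : Multiset.card M using Nat.strong_induction_on generalizing M with
  | _ m ih =>
  by_cases hlt : m < r j
  · exact ⟨M, 0, by simp, hM ▸ hlt⟩
  obtain ⟨B, hBM, hB0, e, he⟩ := Multiset.exists_le_ne_zero_dvd_sum_map_s4 hj r (hM ▸ not_lt.mp hlt)
  have hcard : Multiset.card (M - B) < m := by
    rw [← hM, Multiset.card_sub hBM]
    have := Multiset.card_pos.mpr hB0
    have := Multiset.card_le_card hBM
    omega
  obtain ⟨M', c, hsum, hM'⟩ := ih _ hcard (M - B) rfl
  refine ⟨M', c + e, ?_, hM'⟩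
  rw [← tsub_add_cancel_of_le hBM, Multiset.map_add, Multiset.sum_add, he, ← hsum]
  ring

lemma minLen_mul_le (hx : memGen r x) : minLen r x * r j ≤ x + r j * r j := by
  rcases Nat.eq_zero_or_pos (r j) with hj | hj
  · simp [hj]
  obtain ⟨M, rfl⟩ := exists_multiset_sum_map_eq hx
  obtain ⟨M', c, hsum, hM'⟩ := exists_sum_map_add_mul_eq r j hj M
  have hlen : Multiset.card M' + c ∈ lenSet r (M.map r).sum := by
    simpa [← hsum] using card_mem_lenSet (r := r) (M' + Multiset.replicate c j)
  calc minLen r (M.map r).sum * r j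
      ≤ (Multiset.card M' + c) * r j := Nat.mul_le_mul_right _ (minLen_le hlen)
    _ ≤ (M.map r).sum + r j * r j := by
      rw [add_mul]
      linarith [Nat.mul_le_mul_right (r j) hM'.le, Nat.zero_le (M'.map r).sum]

end Reduction

section ShiftGen

variable {κ : ℕ} {r : Fin κ → ℕ} {n a ℓ : ℕ}

lemma mem_lenSet_shiftGen_iff :
    ℓ ∈ lenSet (shiftGen n r) a ↔ ∃ s, a = ℓ * n + s ∧ memGen r s ∧ minLen r s ≤ ℓ := by
  constructor
  · rintro ⟨z, rfl, rfl⟩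
    have hlen : ∑ i : Fin κ, z i.succ ∈ lenSet r (∑ i : Fin κ, z i.succ * r i) := ⟨_, rfl, rfl⟩
    refine ⟨_, ?_, memGen_of_mem_lenSet hlen, (minLen_le hlen).trans ?_⟩
    · simp only [Fin.sum_univ_succ, shiftGen, Fin.cons_zero, Fin.cons_succ, mul_add,
        Finset.sum_add_distrib, add_mul, Finset.sum_mul]
      ring
    · simp only [Fin.sum_univ_succ]
      omega
  · rintro ⟨s, rfl, hs, hℓ⟩
    obtain ⟨z, hz, hzℓ⟩ := minLen_mem_lenSet hs
    refine ⟨Fin.cons (ℓ - minLen r s) z, ?_, ?_⟩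
    · simp only [Fin.sum_univ_succ, shiftGen, Fin.cons_zero, Fin.cons_succ, mul_add,
        Finset.sum_add_distrib, ← Finset.sum_mul, ← hz, ← hzℓ]
      rw [← add_assoc, ← add_mul, Nat.sub_add_cancel hℓ]
    · simp only [Fin.sum_univ_succ, Fin.cons_zero, Fin.cons_succ, ← hzℓ]
      omega

end ShiftGen

section MonotoneGen

variable {κ : ℕ} {r : Fin (κ + 1) → ℕ} {n s ℓ : ℕ}

lemma le_mul_last_of_mem_lenSet (hr : Monotone r) (h : ℓ ∈ lenSet r s) :
    s ≤ ℓ * r (Fin.last κ) := by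
  obtain ⟨z, rfl, rfl⟩ := h
  rw [Finset.sum_mul]
  exact Finset.sum_le_sum fun j _ => Nat.mul_le_mul_left _ (hr (Fin.le_last j))

lemma minLen_le_of_mem_lenSet_shiftGen (hr : Monotone r) (hn : r (Fin.last κ) ^ 2 < n)
    (hs : memGen r s) (hℓ : ℓ ∈ lenSet (shiftGen n r) (minLen r s * n + s)) :
    minLen r s ≤ ℓ := by
  set N := r (Fin.last κ)
  by_contra! hlt
  obtain ⟨t, ht, htS, htℓ⟩ := mem_lenSet_shiftGen_iff.mp hℓ
  have ht_le : t ≤ ℓ * N :=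
    (le_mul_last_of_mem_lenSet hr (minLen_mem_lenSet htS)).trans (Nat.mul_le_mul_right N htℓ)
  have ht_ge : n + s ≤ t := by nlinarith
  have hs_len : minLen r s * N ≤ s + N * N := minLen_mul_le r (Fin.last κ) hs
  nlinarith

lemma isLeast_lenSet_shiftGen (hr : Monotone r) (hn : r (Fin.last κ) ^ 2 < n)
    (hs : memGen r s) :
    IsLeast (lenSet (shiftGen n r) (minLen r s * n + s)) (minLen r s) :=
  ⟨mem_lenSet_shiftGen_iff.mpr ⟨s, rfl, hs, le_rfl⟩,
    fun _ => minLen_le_of_mem_lenSet_shiftGen hr hn hs⟩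

end MonotoneGen

lemma eq_zero_of_mem_aperySet_of_eq_mul_add {κ : ℕ} {r : Fin κ → ℕ} {n i s u : ℕ}
    (hgcd : n.gcd (Finset.univ.gcd r) = 1) (hdn : memGen r (Finset.univ.gcd r * n))
    (hi : i ∈ aperySet r (Finset.univ.gcd r * n)) (hs : memGen r s) (h : i = u * n + s) :
    u = 0 := by
  set d := Finset.univ.gcd r
  have hdu : d ∣ u := by
    have hdun : d ∣ u * n :=
      (Nat.dvd_add_left (gcd_dvd_of_memGen hs)).mp (h ▸ gcd_dvd_of_memGen hi.1)
    exact (Nat.Coprime.symm hgcd).dvd_of_dvd_mul_right hdun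
  obtain ⟨c, rfl⟩ := hdu
  by_contra! hu
  obtain ⟨c, rfl⟩ := Nat.exists_eq_add_one_of_ne_zero (right_ne_zero_of_mul hu)
  have hsub : i - d * n = c * (d * n) + s := by
    rw [h, Nat.sub_eq_iff_eq_add (by nlinarith)]
    ring
  exact hi.2 ⟨by nlinarith, hsub ▸ memGen_add (memGen_mul c hdn) hs⟩

section ShiftGenApery

variable {κ : ℕ} {r : Fin (κ + 1) → ℕ} {n : ℕ}

lemma lenSet_shiftGen_add_minLen_mul (hr : Monotone r) (hn : r (Fin.last κ) ^ 2 < n)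
    (hgcd : n.gcd (Finset.univ.gcd r) = 1) (hdn : memGen r (Finset.univ.gcd r * n))
    {i : ℕ} (hi : i ∈ aperySet r (Finset.univ.gcd r * n)) :
    lenSet (shiftGen n r) (i + minLen r i * n) = {minLen r i} := by
  have hleast := isLeast_lenSet_shiftGen hr hn hi.1
  rw [add_comm i]
  refine Set.eq_singleton_iff_unique_mem.mpr ⟨hleast.1, fun ℓ hℓ => ?_⟩
  obtain ⟨u, rfl⟩ := Nat.exists_eq_add_of_le (hleast.2 hℓ)
  obtain ⟨s, hsum, hs, -⟩ := mem_lenSet_shiftGen_iff.mp hℓ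
  have hu := eq_zero_of_mem_aperySet_of_eq_mul_add hgcd hdn hi hs (u := u) (by linarith)
  rw [hu, add_zero]

lemma exists_minLen_eq_of_mem_aperySet_shiftGen {a ℓ : ℕ} (ha : a ∈ aperySet (shiftGen n r) n)
    (hℓ : ℓ ∈ lenSet (shiftGen n r) a) : ∃ s, memGen r s ∧ minLen r s = ℓ ∧ a = ℓ * n + s := by
  obtain ⟨s, rfl, hs, hle⟩ := mem_lenSet_shiftGen_iff.mp hℓ
  refine ⟨s, hs, le_antisymm hle ?_, rfl⟩
  by_contra! hlt
  obtain ⟨ℓ, rfl⟩ := Nat.exists_eq_add_one_of_ne_zero (by omega : ℓ ≠ 0)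
  have hsub : (ℓ + 1) * n + s - n = ℓ * n + s := by
    rw [add_mul, one_mul, add_right_comm, Nat.add_sub_cancel]
  have hmem : ℓ ∈ lenSet (shiftGen n r) (ℓ * n + s) :=
    mem_lenSet_shiftGen_iff.mpr ⟨s, rfl, hs, by omega⟩
  exact ha.2 ⟨by nlinarith, hsub ▸ memGen_of_mem_lenSet hmem⟩

lemma lenSet_shiftGen_subsingleton (hr : Monotone r) (hn : r (Fin.last κ) ^ 2 < n) {a : ℕ}
    (ha : a ∈ aperySet (shiftGen n r) n) : (lenSet (shiftGen n r) a).Subsingleton := by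
  have hle : ∀ ℓ₁ ∈ lenSet (shiftGen n r) a, ∀ ℓ₂ ∈ lenSet (shiftGen n r) a, ℓ₁ ≤ ℓ₂ := by
    intro ℓ₁ h₁ ℓ₂ h₂
    obtain ⟨s, hs, rfl, rfl⟩ := exists_minLen_eq_of_mem_aperySet_shiftGen ha h₁
    exact (isLeast_lenSet_shiftGen hr hn hs).2 h₂
  exact fun ℓ₁ h₁ ℓ₂ h₂ => le_antisymm (hle ℓ₁ h₁ ℓ₂ h₂) (hle ℓ₂ h₂ ℓ₁ h₁)

end ShiftGenApery

theorem length_singleton_general {k : ℕ} (r : Fin (k + 1) → ℕ)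
    (hmono : StrictMono r)
    (d : ℕ) (hd : d = Finset.univ.gcd r)
    (n : ℕ) (hn : n > (r (Fin.last k)) ^ 2)
    (hgcd : Nat.gcd n d = 1) (hdn : memGen r (d * n)) :
    (∀ i ∈ aperySet r (d * n),
        lenSet (shiftGen n r) (i + minLen r i * n) = {minLen r i}) ∧
      (∀ a ∈ aperySet (shiftGen n r) n, ∃ ℓ : ℕ, lenSet (shiftGen n r) a = {ℓ}) := by
  subst hd
  refine ⟨fun i hi => lenSet_shiftGen_add_minLen_mul hmono.monotone hn hgcd hdn hi,
    fun a ha => ⟨_, (lenSet_shiftGen_subsingleton hmono.monotone hn ha).eq_singleton_of_mem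
      (minLen_mem_lenSet ha.1)⟩⟩

/-- Under `n > r_k²`, `gcd(n,d) = 1`, `dn ∈ S`: for each `i ∈ Ap(S; dn)`,
the element `a = i + m_S(i)·n` of `M_n` has `L_{M_n}(a) = {m_S(i)}`.  In particular
`M_n` is homogeneous: every element of `Ap(M_n; n)` has a unique factorization length. -/
theorem length_singleton {k : ℕ} (r : Fin (k + 1) → ℕ)
    (hmono : StrictMono r) (hpos : 0 < r 0)
    (d : ℕ) (hd : d = Finset.univ.gcd r)
    (n : ℕ) (hn : n > (r (Fin.last k)) ^ 2)
    (hgcd : Nat.gcd n d = 1) (hdn : memGen r (d * n)) :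
    (∀ i ∈ aperySet r (d * n),
        lenSet (shiftGen n r) (i + minLen r i * n) = {minLen r i}) ∧
      (∀ a ∈ aperySet (shiftGen n r) n, ∃ ℓ : ℕ, lenSet (shiftGen n r) a = {ℓ}) :=
  length_singleton_general r hmono d hd n hn hgcd hdn
end

section
/- Let S = ⟨r₁,…,r_k⟩ with d = gcd(r₁,…,r_k) and n > r_k² with dn ∈ S, gcd(n,d)=1. Then g(M_n) = Σ_{i=0}^{n−1} ⌊di/n⌋ + d·g(S/d) + Σ_{i < n, di ∈ S} m_S(di) + Σ_{i ≥ 0, di ∉ S} m_S(di + dn), where g(S/d) = |ℤ≥0 \ (S/d)| for the primitive monoid S/d = ⟨r₁/d,…,r_k/d⟩. -/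
open scoped Classical

/-!
Write `T = ⟨s⟩ = S/d` and `q` for its largest generator. An element of `M_n` is `c * n + d * u`
with `u ∈ T` and `c ≥ m_T(u)`. Since `n > q²` lies beyond the conductor of `T`, the least element
of `T` congruent to `i` modulo `n` is `i` or `i + n`; and the bounds
`u ≤ q * m_T(u) ≤ u + (q - 1)²` (the upper one from a zero-sum argument in the Apéry set of
`T` with respect to `q`) show that minimal lengths cannot decrease along steps of size `n`.
Hence the Apéry set of `M_n` with respect to `n` is `{d * tᵢ + n * m_T(tᵢ)}`, and Selmer's formula
`g(M_n) = ∑ ⌊w / n⌋` over it splits into the four sums.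
-/

open Finset

namespace Multiset

variable {ι : Type*} [Fintype ι] [DecidableEq ι]

theorem sum_map_eq_sum_count_mul (F : Multiset ι) (f : ι → ℕ) :
    (F.map f).sum = ∑ i, F.count i * f i := by
  rw [Finset.sum_multiset_map_count]
  simp only [smul_eq_mul]
  exact Finset.sum_subset (subset_univ _) fun i _ hi => by simp_all

theorem exists_count_eq (z : ι → ℕ) : ∃ F : Multiset ι, ∀ i, F.count i = z i :=
  ⟨∑ i, z i • {i}, fun j => by simp [count_sum', count_singleton]⟩

/-- Pigeonhole on the prefix sums of an enumeration of `F` modulo `m`. -/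
theorem exists_le_ne_zero_dvd_sum_map_s19 {α : Type*} {m : ℕ} (hm : 0 < m) (F : Multiset α)
    (f : α → ℕ) (hF : m ≤ card F) : ∃ B ≤ F, B ≠ 0 ∧ m ∣ (B.map f).sum := by
  induction F using Quotient.inductionOn with | h L => ?_
  obtain ⟨a, ha, b, hb, hab, heq⟩ := Finset.exists_ne_map_eq_of_card_lt_of_maps_to
    (s := Finset.range (m + 1)) (t := Finset.range m)
    (f := fun j => ((L.take j).map f).sum % m) (by simp) (fun j _ => by simpa using Nat.mod_lt _ hm)
  wlog hlt : a < b generalizing a b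
  · exact this b hb a ha hab.symm heq.symm (by omega)
  have hL : m ≤ L.length := hF
  have hbL : b ≤ L.length := by rw [Finset.mem_range] at hb; omega
  refine ⟨((L.take b).drop a : List α), coe_le.2 ((List.drop_sublist _ _).trans
    (List.take_sublist _ _)).subperm, by simp; omega, ?_⟩
  have hsplit := congrArg (fun l => (l.map f).sum) (List.take_append_drop a (L.take b))
  simp only [List.take_take, min_eq_left hlt.le, List.map_append, List.sum_append] at hsplit
  have hdvd := (Nat.modEq_iff_dvd' (hsplit ▸ Nat.le_add_right _ _)).1 heq
  rwa [← hsplit, Nat.add_sub_cancel_left] at hdvd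

end Multiset

section Factorizations

variable {k : ℕ} {r : Fin k → ℕ} {a : ℕ}

theorem mem_lenSet_iff {ℓ : ℕ} :
    ℓ ∈ lenSet r a ↔ ∃ F : Multiset (Fin k), (F.map r).sum = a ∧ Multiset.card F = ℓ := by
  constructor
  · rintro ⟨z, rfl, rfl⟩
    obtain ⟨F, hF⟩ := Multiset.exists_count_eq z
    refine ⟨F, by simp [Multiset.sum_map_eq_sum_count_mul, hF], ?_⟩
    simp [← Multiset.sum_count_eq_card (s := univ) (fun _ _ => mem_univ _), hF]
  · rintro ⟨F, rfl, rfl⟩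
    exact ⟨(F.count ·), F.sum_map_eq_sum_count_mul r,
      (Multiset.sum_count_eq_card fun _ _ => mem_univ _).symm⟩

theorem memGen_iff_nonempty_lenSet : memGen r a ↔ (lenSet r a).Nonempty :=
  ⟨fun ⟨z, hz⟩ => ⟨_, z, hz, rfl⟩, fun ⟨_, z, hz, _⟩ => ⟨z, hz⟩⟩

theorem memGen_iff_exists_multiset :
    memGen r a ↔ ∃ F : Multiset (Fin k), (F.map r).sum = a := by
  simp only [memGen_iff_nonempty_lenSet, Set.Nonempty, mem_lenSet_iff]
  exact ⟨fun ⟨_, F, hF, _⟩ => ⟨F, hF⟩, fun ⟨F, hF⟩ => ⟨_, F, hF, rfl⟩⟩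

theorem exists_card_eq_minLen (h : memGen r a) :
    ∃ F : Multiset (Fin k), (F.map r).sum = a ∧ Multiset.card F = minLen r a :=
  mem_lenSet_iff.1 (Nat.sInf_mem (memGen_iff_nonempty_lenSet.1 h))

theorem minLen_le_card {F : Multiset (Fin k)} (hF : (F.map r).sum = a) :
    minLen r a ≤ Multiset.card F :=
  Nat.sInf_le (mem_lenSet_iff.2 ⟨F, hF, rfl⟩)

theorem sum_map_add_replicate (F : Multiset (Fin k)) (c : ℕ) (j : Fin k) :
    ((F + Multiset.replicate c j).map r).sum = (F.map r).sum + c * r j := by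
  simp

theorem memGen_add_mul (h : memGen r a) (c : ℕ) (j : Fin k) : memGen r (a + c * r j) := by
  obtain ⟨F, rfl⟩ := memGen_iff_exists_multiset.1 h
  exact memGen_iff_exists_multiset.2 ⟨_, sum_map_add_replicate F c j⟩

theorem minLen_add_mul_le (h : memGen r a) (c : ℕ) (j : Fin k) :
    minLen r (a + c * r j) ≤ minLen r a + c := by
  obtain ⟨F, rfl, hF⟩ := exists_card_eq_minLen h
  simpa [hF] using minLen_le_card (sum_map_add_replicate F c j)

theorem le_mul_minLen {q : ℕ} (hle : ∀ i, r i ≤ q) (h : memGen r a) : a ≤ q * minLen r a := by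
  obtain ⟨F, hF, hlen⟩ := exists_card_eq_minLen h
  have := Multiset.sum_le_card_nsmul (F.map r) q (by simpa using fun i _ => hle i)
  simp only [Multiset.card_map, smul_eq_mul] at this
  rw [← hlen, mul_comm, ← hF]
  exact this

end Factorizations

section Apery

variable {k : ℕ} {r : Fin k → ℕ} {t w : ℕ}

theorem exists_mem_aperySet_add_mul {j : Fin k} (hj : 0 < r j) (h : memGen r t) :
    ∃ w ∈ aperySet r (r j), ∃ c, t = w + c * r j := by
  induction t using Nat.strong_induction_on with
  | _ t ih =>
    by_cases ht : r j ≤ t ∧ memGen r (t - r j)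
    · obtain ⟨w, hw, c, hc⟩ := ih (t - r j) (by omega) ht.2
      exact ⟨w, hw, c + 1, by rw [add_mul, one_mul, ← add_assoc, ← hc]; omega⟩
    · exact ⟨t, ⟨h, ht⟩, 0, by simp⟩

/-- A factorization of an Apéry element with at least `r j` atoms has a nonempty block whose sum
is a multiple of `r j`; trading that block for copies of `r j` would put `w - r j` in the monoid. -/
theorem card_lt_of_mem_aperySet (hpos : ∀ i, 0 < r i) {j : Fin k} (hw : w ∈ aperySet r (r j))
    {F : Multiset (Fin k)} (hF : (F.map r).sum = w) : Multiset.card F < r j := by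
  by_contra! hcard
  obtain ⟨B, hBF, hB0, c, hc⟩ := Multiset.exists_le_ne_zero_dvd_sum_map_s19 (hpos j) F r hcard
  obtain ⟨c, rfl⟩ := Nat.exists_eq_add_one_of_ne_zero (n := c) fun hc0 => by
    obtain ⟨i, hi⟩ := Multiset.exists_mem_of_ne_zero hB0
    have hle := Multiset.le_sum_of_mem (Multiset.mem_map_of_mem r hi)
    rw [hc, hc0, mul_zero] at hle
    exact (hpos i).ne' (Nat.le_zero.1 hle)
  have hsplit : w = ((F - B).map r).sum + c * r j + r j := by
    rw [← hF, ← tsub_add_cancel_of_le hBF, Multiset.map_add, Multiset.sum_add, hc,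
      tsub_add_cancel_of_le hBF]
    ring
  refine hw.2 ⟨by omega, ?_⟩
  rw [hsplit, Nat.add_sub_cancel]
  exact memGen_add_mul (memGen_iff_exists_multiset.2 ⟨_, rfl⟩) _ _

theorem mul_minLen_le (hpos : ∀ i, 0 < r i) (h : memGen r t) (j : Fin k) :
    r j * minLen r t ≤ t + (r j - 1) ^ 2 := by
  obtain ⟨w, hw, c, rfl⟩ := exists_mem_aperySet_add_mul (hpos j) h
  obtain ⟨F, hF, hlen⟩ := exists_card_eq_minLen hw.1
  have hlt : minLen r w < r j := hlen ▸ card_lt_of_mem_aperySet hpos hw hF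
  have hle : minLen r w ≤ w := by
    have := Multiset.card_nsmul_le_sum (s := F.map r) (a := 1)
      (by simpa [Nat.one_le_iff_ne_zero] using fun i _ => (hpos i).ne')
    simp_all
  have hadd := minLen_add_mul_le hw.1 c j
  obtain ⟨q, hq⟩ := Nat.exists_eq_add_one_of_ne_zero (hpos j).ne'
  rw [hq] at hlt hadd ⊢
  rw [Nat.add_sub_cancel]
  have hmq : q * minLen r w ≤ q * q := Nat.mul_le_mul_left q (by omega)
  calc (q + 1) * minLen r (w + c * (q + 1)) ≤ (q + 1) * (minLen r w + c) := by gcongr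
    _ ≤ w + c * (q + 1) + q ^ 2 := by nlinarith

/-- `r j * minLen r t ≤ t + (r j - 1) ^ 2 < u ≤ r j * minLen r u`. -/
theorem minLen_le_minLen_of_add_le (hpos : ∀ i, 0 < r i) {j : Fin k} (hle : ∀ i, r i ≤ r j)
    {n u : ℕ} (hn : (r j - 1) ^ 2 < n) (ht : memGen r t) (hu : memGen r u) (htu : t + n ≤ u) :
    minLen r t ≤ minLen r u := by
  have h1 := mul_minLen_le hpos ht j
  have h2 := le_mul_minLen hle hu
  exact (Nat.lt_of_mul_lt_mul_left (a := r j) (by omega)).le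

theorem exists_forall_ge_memGen (hgcd : univ.gcd r = 1) : ∃ N, ∀ m ≥ N, memGen r m := by
  obtain ⟨N, hN⟩ := Nat.exists_mem_closure_of_ge (Set.range r)
  have hgcd' : Nat.setGcd (Set.range r) = 1 :=
    Nat.dvd_one.1 (hgcd ▸ dvd_gcd fun i _ => Nat.setGcd_dvd_of_mem ⟨i, rfl⟩)
  refine ⟨N, fun m hm => ?_⟩
  obtain ⟨z, hz⟩ := AddSubmonoid.mem_closure_range_iff_of_fintype.1 (hN m hm (hgcd' ▸ one_dvd m))
  exact ⟨z, by simpa using hz⟩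

/-- The Apéry elements with respect to `r j` are at most `(r j - 1) * q`, and every `m` above
them is reached from the Apéry element in its class by adding copies of `r j`. -/
theorem memGen_of_le (hgcd : univ.gcd r = 1) (hpos : ∀ i, 0 < r i) {q : ℕ} (hle : ∀ i, r i ≤ q)
    (j : Fin k) {m : ℕ} (hm : (r j - 1) * q ≤ m) : memGen r m := by
  obtain ⟨N, hN⟩ := exists_forall_ge_memGen hgcd
  obtain ⟨w, hw, c, hc⟩ := exists_mem_aperySet_add_mul (hpos j)
    (hN (m + N * r j) (le_add_left (Nat.le_mul_of_pos_right N (hpos j))))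
  obtain ⟨F, hF⟩ := memGen_iff_exists_multiset.1 hw.1
  have hwq : w ≤ (r j - 1) * q := by
    have hsum := Multiset.sum_le_card_nsmul (F.map r) q (by simpa using fun i _ => hle i)
    have hcard := card_lt_of_mem_aperySet hpos hw hF
    rw [Multiset.card_map, smul_eq_mul, hF] at hsum
    exact hsum.trans (Nat.mul_le_mul_right q (by omega))
  have hNc : N ≤ c := Nat.le_of_mul_le_mul_right (by omega) (hpos j)
  have hmw : m = w + (c - N) * r j := by rw [Nat.sub_mul]; omega
  exact hmw ▸ memGen_add_mul hw.1 _ _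

end Apery

section Scaling

variable {k : ℕ} {r s : Fin k → ℕ} {d : ℕ}

theorem sum_mul_eq_mul_sum_of_eq_mul (hrs : ∀ i, r i = d * s i) (z : Fin k → ℕ) :
    ∑ i, z i * r i = d * ∑ i, z i * s i := by
  simp only [hrs, mul_sum]
  exact sum_congr rfl fun i _ => by ring

theorem memGen_iff_of_eq_mul (hrs : ∀ i, r i = d * s i) {a : ℕ} :
    memGen r a ↔ ∃ u, memGen s u ∧ a = d * u :=
  ⟨fun ⟨z, hz⟩ => ⟨_, ⟨z, rfl⟩, hz.trans (sum_mul_eq_mul_sum_of_eq_mul hrs z)⟩,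
    fun ⟨_, ⟨z, hz⟩, ha⟩ => ⟨z, by rw [ha, hz, sum_mul_eq_mul_sum_of_eq_mul hrs]⟩⟩

theorem memGen_mul_iff (hd : 0 < d) (hrs : ∀ i, r i = d * s i) {a : ℕ} :
    memGen r (d * a) ↔ memGen s a := by
  rw [memGen_iff_of_eq_mul hrs]
  exact ⟨fun ⟨u, hu, h⟩ => Nat.eq_of_mul_eq_mul_left hd h ▸ hu, fun h => ⟨a, h, rfl⟩⟩

theorem minLen_mul_eq (hd : 0 < d) (hrs : ∀ i, r i = d * s i) (a : ℕ) :
    minLen r (d * a) = minLen s a := by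
  unfold minLen lenSet
  simp only [sum_mul_eq_mul_sum_of_eq_mul hrs, Nat.mul_right_inj hd.ne']

theorem gcd_eq_one_of_eq_mul (hd : 0 < d) (hrs : ∀ i, r i = d * s i)
    (hgcd : univ.gcd r = d) : univ.gcd s = 1 := by
  rw [show r = fun i => d * s i from funext hrs, Finset.gcd_mul_left, normalize_eq] at hgcd
  exact (Nat.mul_eq_left hd.ne').1 hgcd

end Scaling

theorem sum_cons_mul_shiftGen {k : ℕ} (n : ℕ) (r : Fin k → ℕ) (a : ℕ) (z : Fin k → ℕ) :
    ∑ i, (Fin.cons a z : Fin (k + 1) → ℕ) i * shiftGen n r i =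
      (a + ∑ i, z i) * n + ∑ i, z i * r i := by
  simp only [Fin.sum_univ_succ, shiftGen, Fin.cons_zero, Fin.cons_succ, mul_add,
    sum_add_distrib, add_mul, sum_mul]
  ring

theorem memGen_shiftGen_iff {k : ℕ} {n : ℕ} {r : Fin k → ℕ} {x : ℕ} :
    memGen (shiftGen n r) x ↔ ∃ c u, memGen r u ∧ minLen r u ≤ c ∧ x = c * n + u := by
  constructor
  · rintro ⟨z, rfl⟩
    rw [← Fin.cons_self_tail z, sum_cons_mul_shiftGen]
    exact ⟨_, _, ⟨_, rfl⟩, le_add_left (Nat.sInf_le ⟨_, rfl, rfl⟩), rfl⟩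
  · rintro ⟨c, u, hu, hc, rfl⟩
    obtain ⟨z, hz, hlen⟩ := Nat.sInf_mem (memGen_iff_nonempty_lenSet.1 hu)
    refine ⟨Fin.cons (c - ∑ i, z i) z, ?_⟩
    rw [sum_cons_mul_shiftGen, ← hz, Nat.sub_add_cancel (hlen ▸ hc)]

theorem lt_iff_exists_mod_add_mul_of_modEq {n x y : ℕ} (hn : 0 < n) (h : x ≡ y [MOD n]) :
    x < y ↔ ∃ j < y / n, y % n + n * j = x := by
  have hx := Nat.div_add_mod x n
  have hy := Nat.div_add_mod y n
  have hxy : x % n = y % n := h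
  constructor
  · intro hlt
    refine ⟨x / n, lt_of_not_ge fun hle => ?_, by omega⟩
    have := Nat.mul_le_mul_left n hle
    omega
  · rintro ⟨j, hj, rfl⟩
    have := (Nat.mul_lt_mul_left hn).2 hj
    omega

/-- Selmer's formula for the genus in terms of the Apéry set `{w i | i < n}`. -/
theorem ncard_setOf_not_eq_sum_div {P : ℕ → Prop} {n : ℕ} (hn : 0 < n) (w : ℕ → ℕ)
    (hadd : ∀ x, P x → P (x + n)) (hw : ∀ i < n, P (w i))
    (hmin : ∀ i < n, ∀ x, P x → x ≡ w i [MOD n] → w i ≤ x)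
    (hinj : Set.InjOn (fun i => w i % n) (Set.Iio n)) :
    {x | ¬ P x}.ncard = ∑ i ∈ range n, w i / n := by
  have hsurj : ∀ x, ∃ i < n, x ≡ w i [MOD n] := by
    intro x
    obtain ⟨i, hi, hxi⟩ := surj_on_of_inj_on_of_card_le (s := range n) (t := range n)
      (fun i _ => w i % n) (fun i _ => mem_range.2 (Nat.mod_lt _ hn))
      (fun i j hi hj h => hinj (mem_range.1 hi) (mem_range.1 hj) h) le_rfl
      (x % n) (mem_range.2 (Nat.mod_lt _ hn))
    exact ⟨i, mem_range.1 hi, hxi⟩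
  have hmem : ∀ i < n, ∀ x, x ≡ w i [MOD n] → (P x ↔ w i ≤ x) := by
    refine fun i hi x hxi => ⟨fun hx => hmin i hi x hx hxi, fun hle => ?_⟩
    obtain ⟨j, rfl⟩ : ∃ j, x = w i + n * j := by
      obtain ⟨j, hj⟩ := (Nat.modEq_iff_dvd' hle).1 hxi.symm
      exact ⟨j, by omega⟩
    induction j with
    | zero => simpa using hw i hi
    | succ j ih => simpa [mul_add, ← add_assoc] using hadd _ (ih (by simp [Nat.ModEq]) (by omega))
  have hgaps : {x | ¬ P x} =
      ↑((range n).biUnion fun i => (range (w i / n)).image fun j => w i % n + n * j) := by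
    ext x
    simp only [Set.mem_ofPred_eq, coe_biUnion, coe_image, coe_range, Set.mem_iUnion,
      Set.mem_image, Set.mem_Iio]
    constructor
    · intro hx
      obtain ⟨i, hi, hxi⟩ := hsurj x
      rw [hmem i hi x hxi, not_le, lt_iff_exists_mod_add_mul_of_modEq hn hxi] at hx
      exact ⟨i, hi, hx⟩
    · rintro ⟨i, hi, hx⟩
      have hxi : x ≡ w i [MOD n] := by
        obtain ⟨j, -, rfl⟩ := hx
        simp [Nat.ModEq, Nat.add_mul_mod_self_left]
      rw [hmem i hi x hxi, not_le, lt_iff_exists_mod_add_mul_of_modEq hn hxi]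
      exact hx
  rw [hgaps, Set.ncard_coe_finset, card_biUnion]
  · refine sum_congr rfl fun i _ => ?_
    rw [card_image_of_injective _ fun j j' h => by simpa [hn.ne'] using h, card_range]
  · intro i hi i' hi' hne
    simp only [Function.onFun, disjoint_left, mem_image]
    rintro _ ⟨j, -, rfl⟩ ⟨j', -, h⟩
    apply hne (hinj (mem_range.1 hi) (mem_range.1 hi') _)
    simpa [Nat.add_mul_mod_self_left] using congrArg (· % n) h.symm

section ShiftedMonoid

variable {k : ℕ} {s : Fin k → ℕ} {n : ℕ}

/-- For `i < n` and `n` at least the conductor of `⟨s⟩`, the least element of `⟨s⟩` congruent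
to `i` modulo `n`. -/
noncomputable def aperyRep (s : Fin k → ℕ) (n i : ℕ) : ℕ :=
  if memGen s i then i else i + n

/-- The least element of `M_n = ⟨n, n + d * s 0, …⟩` congruent to `d * i` modulo `n`. -/
noncomputable def shiftApery (s : Fin k → ℕ) (d n i : ℕ) : ℕ :=
  d * aperyRep s n i + n * minLen s (aperyRep s n i)

theorem memGen_aperyRep (hcond : ∀ m ≥ n, memGen s m) (i : ℕ) : memGen s (aperyRep s n i) := by
  unfold aperyRep
  split_ifs with h
  · exact h
  · exact hcond _ (Nat.le_add_left n i)

theorem aperyRep_modEq (i : ℕ) : aperyRep s n i ≡ i [MOD n] := by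
  unfold aperyRep
  split_ifs
  · rfl
  · simp [Nat.ModEq]

theorem aperyRep_le {i u : ℕ} (hi : i < n) (hu : memGen s u) (hui : u ≡ i [MOD n]) :
    aperyRep s n i ≤ u := by
  have hdiv := Nat.div_add_mod u n
  have hmod : u % n = i := Eq.trans hui (Nat.mod_eq_of_lt hi)
  unfold aperyRep
  split_ifs with h
  · exact hmod ▸ Nat.mod_le u n
  · have : u / n ≠ 0 := fun h0 => h (by rw [h0, mul_zero, zero_add, hmod] at hdiv; exact hdiv ▸ hu)
    nlinarith [Nat.one_le_iff_ne_zero.2 this]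

theorem shiftApery_modEq (d i : ℕ) : shiftApery s d n i ≡ d * i [MOD n] := by
  unfold shiftApery
  exact (Nat.add_mul_mod_self_left _ _ _).trans (Nat.ModEq.mul_left d (aperyRep_modEq i))

theorem shiftApery_div (hn : 0 < n) (d i : ℕ) :
    shiftApery s d n i / n =
      d * i / n + if memGen s i then minLen s i else d + minLen s (i + n) := by
  unfold shiftApery aperyRep
  split_ifs
  · rw [Nat.add_mul_div_left _ _ hn]
  · rw [show d * (i + n) + n * minLen s (i + n) = d * i + n * (d + minLen s (i + n)) by ring,
      Nat.add_mul_div_left _ _ hn]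

theorem setOf_not_memGen_eq (hcond : ∀ m ≥ n, memGen s m) :
    {m | ¬ memGen s m} = ↑{i ∈ range n | ¬ memGen s i} := by
  ext m
  simp only [Set.mem_ofPred_eq, coe_filter, mem_range]
  exact ⟨fun h => ⟨not_le.1 fun hm => h (hcond m hm), h⟩, And.right⟩

variable {r : Fin k → ℕ} {d : ℕ}

/-- Minimality of `shiftApery`: a competitor `c * n + d * u` has `u` in the class of
`aperyRep s n i`, so either `u = aperyRep s n i` or `u` is at least `n` larger, and then
its minimal length is not smaller. -/
theorem shiftApery_le (hd : 0 < d) (hrs : ∀ i, r i = d * s i) (hpos : ∀ i, 0 < s i)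
    {j : Fin k} (hle : ∀ i, s i ≤ s j) (hsq : (s j - 1) ^ 2 < n) (hcond : ∀ m ≥ n, memGen s m)
    (hcop : Nat.gcd n d = 1) {i x : ℕ} (hi : i < n) (hx : memGen (shiftGen n r) x)
    (hmod : x ≡ d * i [MOD n]) : shiftApery s d n i ≤ x := by
  obtain ⟨c, _, hu', hc, rfl⟩ := memGen_shiftGen_iff.1 hx
  obtain ⟨u, hu, rfl⟩ := (memGen_iff_of_eq_mul hrs).1 hu'
  rw [minLen_mul_eq hd hrs] at hc
  have hui : u ≡ i [MOD n] := Nat.ModEq.cancel_left_of_coprime hcop <| by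
    simpa [Nat.ModEq, Nat.mul_mod_left] using hmod
  have htu := aperyRep_le hi hu hui
  have hlen : minLen s (aperyRep s n i) ≤ c := by
    obtain ⟨l, hl⟩ := (Nat.modEq_iff_dvd' htu).1 ((aperyRep_modEq i).trans hui.symm)
    rcases l with _ | l
    · rwa [show aperyRep s n i = u by omega]
    · refine le_trans ?_ hc
      have : n ≤ n * (l + 1) := Nat.le_mul_of_pos_right n l.succ_pos
      exact minLen_le_minLen_of_add_le hpos hle hsq (memGen_aperyRep hcond i) hu (by omega)
  unfold shiftApery
  nlinarith

theorem genus_shiftGen_eq_sum (hd : 0 < d) (hrs : ∀ i, r i = d * s i) (hpos : ∀ i, 0 < s i)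
    {j : Fin k} (hle : ∀ i, s i ≤ s j) (hsq : (s j - 1) ^ 2 < n) (hcond : ∀ m ≥ n, memGen s m)
    (hcop : Nat.gcd n d = 1) :
    genus (shiftGen n r) = ∑ i ∈ range n, shiftApery s d n i / n := by
  refine ncard_setOf_not_eq_sum_div (by omega) _ (fun x hx => ?_) (fun i _ => ?_)
    (fun i hi x hx hmod => shiftApery_le hd hrs hpos hle hsq hcond hcop hi hx
      (hmod.trans (shiftApery_modEq d i))) ?_
  · simpa [shiftGen] using memGen_add_mul hx 1 0
  · exact memGen_shiftGen_iff.2 ⟨_, _, (memGen_mul_iff hd hrs).2 (memGen_aperyRep hcond i),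
      (minLen_mul_eq hd hrs _).le, by unfold shiftApery; ring⟩
  · intro i hi i' hi' h
    have := Nat.ModEq.cancel_left_of_coprime hcop
      ((shiftApery_modEq d i).symm.trans (h.trans (shiftApery_modEq d i')))
    rwa [Nat.ModEq, Nat.mod_eq_of_lt hi, Nat.mod_eq_of_lt hi'] at this

theorem finsum_minLen_mul_eq_sum (hd : 0 < d) (hrs : ∀ i, r i = d * s i) :
    ∑ᶠ i ∈ {i : ℕ | i < n ∧ memGen r (d * i)}, minLen r (d * i) =
      ∑ i ∈ {i ∈ range n | memGen s i}, minLen s i := by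
  simp_rw [memGen_mul_iff hd hrs, minLen_mul_eq hd hrs, ← mem_range, ← coe_filter]
  exact finsum_mem_coe_finset _ _

theorem finsum_minLen_mul_add_eq_sum (hd : 0 < d) (hrs : ∀ i, r i = d * s i)
    (hcond : ∀ m ≥ n, memGen s m) :
    ∑ᶠ i ∈ {i : ℕ | ¬ memGen r (d * i)}, minLen r (d * i + d * n) =
      ∑ i ∈ {i ∈ range n | ¬ memGen s i}, minLen s (i + n) := by
  simp_rw [memGen_mul_iff hd hrs, ← mul_add, minLen_mul_eq hd hrs, setOf_not_memGen_eq hcond]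
  exact finsum_mem_coe_finset _ _

end ShiftedMonoid

theorem genus_formula_general {k : ℕ} (r s : Fin (k + 1) → ℕ)
    (hmono : StrictMono r) (hpos : 0 < r 0)
    (d : ℕ) (hd : d = Finset.univ.gcd r) (hrs : ∀ i, r i = d * s i)
    (n : ℕ) (hn : n > (r (Fin.last k)) ^ 2)
    (hgcd : Nat.gcd n d = 1) :
    genus (shiftGen n r) =
      (∑ i ∈ Finset.range n, d * i / n) + d * genus s +
        (∑ᶠ i ∈ {i : ℕ | i < n ∧ memGen r (d * i)}, minLen r (d * i)) +
        ∑ᶠ i ∈ {i : ℕ | ¬ memGen r (d * i)}, minLen r (d * i + d * n) := by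
  have hd0 : 0 < d := Nat.pos_of_mul_pos_right (hrs 0 ▸ hpos)
  have hsmono : StrictMono s := fun i j hij =>
    Nat.lt_of_mul_lt_mul_left (a := d) (by simpa only [hrs] using hmono hij)
  have hspos : ∀ i, 0 < s i := fun i =>
    (Nat.pos_of_mul_pos_left (hrs 0 ▸ hpos)).trans_le (hsmono.monotone (Fin.zero_le i))
  have hsle : ∀ i, s i ≤ s (Fin.last k) := fun i => hsmono.monotone (Fin.le_last i)
  have hsq : s (Fin.last k) * s (Fin.last k) < n := by
    have hq := Nat.le_mul_of_pos_left (s (Fin.last k)) hd0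
    rw [hrs, sq] at hn
    exact (Nat.mul_le_mul hq hq).trans_lt hn
  have hcond : ∀ m ≥ n, memGen s m := fun m hm =>
    memGen_of_le (gcd_eq_one_of_eq_mul hd0 hrs hd.symm) hspos hsle 0
      (by nlinarith [Nat.sub_le (s 0) 1, hsle 0])
  rw [genus_shiftGen_eq_sum hd0 hrs hspos hsle
      (by nlinarith [Nat.sub_le (s (Fin.last k)) 1]) hcond hgcd,
    sum_congr rfl fun i _ => shiftApery_div (by omega) d i, sum_add_distrib, sum_ite,
    sum_add_distrib, sum_const, smul_eq_mul, finsum_minLen_mul_eq_sum hd0 hrs,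
    finsum_minLen_mul_add_eq_sum hd0 hrs hcond, genus, setOf_not_memGen_eq hcond,
    Set.ncard_coe_finset]
  ring

/-- Under `n > r_k²`, `dn ∈ S`, `gcd(n,d) = 1`, with `rᵢ = d·sᵢ` (so that
`S/d = ⟨s₁,…,s_k⟩` is primitive):
`g(M_n) = Σ_{i=0}^{n−1} ⌊di/n⌋ + d·g(S/d) + Σ_{i<n, di∈S} m_S(di) + Σ_{i≥0, di∉S} m_S(di+dn)`. -/
theorem genus_formula {k : ℕ} (r s : Fin (k + 1) → ℕ)
    (hmono : StrictMono r) (hpos : 0 < r 0)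
    (d : ℕ) (hd : d = Finset.univ.gcd r) (hrs : ∀ i, r i = d * s i)
    (n : ℕ) (hn : n > (r (Fin.last k)) ^ 2)
    (hgcd : Nat.gcd n d = 1) (hdn : memGen r (d * n)) :
    genus (shiftGen n r) =
      (∑ i ∈ Finset.range n, d * i / n) + d * genus s +
        (∑ᶠ i ∈ {i : ℕ | i < n ∧ memGen r (d * i)}, minLen r (d * i)) +
        ∑ᶠ i ∈ {i : ℕ | ¬ memGen r (d * i)}, minLen r (d * i + d * n) :=
  genus_formula_general r s hmono hpos d hd hrs n hn hgcd
end
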